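/- arXiv:1511.02810 — 3 statements merged into one kernel-verified Lean document; each statement's English description precedes it below -/
import Mathlib

section
/- Suppose X is spread out and irreducible. Then X is π-irreducible and π₁-irreducible, where π₁ is the left Haar measure defined by π₁(A) = π(A⁻¹); moreover, π (equivalently π₁) is a maximal irreducibility measure for X: every nonzero σ-finite Borel measure μ on E such that X is μ-irreducible is absolutely continuous with respect to π. -/
open MeasureTheory ENNReal

noncomputable section

/-- Convolution of two Borel measures on a group. -/
def mconv {E : Type*} [Monoid E] [MeasurableSpace E] (μ ν : Measure E) : Measure E :=
  (μ.prod ν).map (fun p => p.1 * p.2)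

/-- `n`-fold convolution power of `v`, with `convPow v 0 = δ₁`. -/
def convPow {E : Type*} [Monoid E] [MeasurableSpace E] (v : Measure E) : ℕ → Measure E
  | 0 => Measure.dirac 1
  | n + 1 => mconv (convPow v n) v

/-- The (closed) support of a measure on a topological space. -/
def msupport {E : Type*} [TopologicalSpace E] [MeasurableSpace E] (v : Measure E) : Set E :=
  {x | ∀ U : Set E, IsOpen U → x ∈ U → 0 < v U}

/-- The random walk with law `v` is irreducible: the smallest closed subsemigroup of `E`
containing the support of `v` is `E` itself. -/
def IsIrreducibleWalk {E : Type*} [TopologicalSpace E] [Monoid E] [MeasurableSpace E]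
    (v : Measure E) : Prop :=
  ∀ T : Set E, IsClosed T → (∀ a ∈ T, ∀ b ∈ T, a * b ∈ T) → msupport v ⊆ T → T = Set.univ

/-- The random walk with law `v` is `μ`-irreducible: for every `x` and every Borel set `A` of
positive `μ`-measure, some `n`-step transition probability `p(n,x,A) = v^{*n}(x⁻¹A)` is positive. -/
def IsMeasIrreducible {E : Type*} [TopologicalSpace E] [Monoid E] [MeasurableSpace E]
    (μ v : Measure E) : Prop :=
  ∀ x : E, ∀ A : Set E, MeasurableSet A → 0 < μ A →
    ∃ n : ℕ, 1 ≤ n ∧ 0 < convPow v n {y | x * y ∈ A}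

/-!
Replace `π` by the left Haar measure `λ = π.inv`, which has the same null sets. Since some
`v^{*n}` is not singular to `λ`, it dominates `λ` restricted to a compact set `K` of positive
measure, up to null sets. The convolution `λ|_K * λ|_K` has density `w ↦ λ(K ∩ w K⁻¹)`, and the
Steinhaus argument (`λ(g K' \ K')` is small for `g` near `1`) shows that this density is positive
on a nonempty open set `U`; hence `λ|_U ≪ v^{*2n}`. If `λ(A) > 0`, then `λ(U ∩ g⁻¹A) > 0` for all
`g` in an open set (translate `U` onto a point of the support of `λ|_A`), and by irreducibility
the walk reaches that open set; this gives `λ`-irreducibility. Conversely, if `λ(t) = 0` then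
`∫ v^{*n}(x⁻¹t) dλ(x) = (λ * v^{*n})(t) = 0`, so from `λ`-almost every starting point `x` the walk
never charges `t`, which forces every irreducibility measure to be absolutely continuous.
-/

open Topology Pointwise

section Convolution

variable {M : Type*} [Monoid M] [MeasurableSpace M]

theorem convPow_zero (v : Measure M) : convPow v 0 = Measure.dirac 1 := rfl

theorem convPow_succ (v : Measure M) (n : ℕ) : convPow v (n + 1) = convPow v n ∗ₘ v := rfl

variable [MeasurableMul₂ M]

instance isProbabilityMeasure_convPow (v : Measure M) [IsProbabilityMeasure v] (n : ℕ) :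
    IsProbabilityMeasure (convPow v n) := by
  induction n with
  | zero => rw [convPow_zero]; infer_instance
  | succ n ih => rw [convPow_succ]; infer_instance

theorem convPow_add (v : Measure M) [IsProbabilityMeasure v] (m n : ℕ) :
    convPow v (m + n) = convPow v m ∗ₘ convPow v n := by
  induction n with
  | zero => rw [convPow_zero, Measure.mconv_dirac_one, add_zero]
  | succ n ih => rw [← add_assoc, convPow_succ, convPow_succ, ih, Measure.mconv_assoc]

theorem mconv_apply (μ ν : Measure M) [SFinite ν] {s : Set M} (hs : MeasurableSet s) :
    (μ ∗ₘ ν) s = ∫⁻ x, ν ((x * ·) ⁻¹' s) ∂μ := by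
  rw [Measure.mconv, Measure.map_apply measurable_mul hs, Measure.prod_apply (measurable_mul hs)]
  rfl

theorem measurable_measure_preimage_mul_left (ν : Measure M) [SFinite ν] {s : Set M}
    (hs : MeasurableSet s) : Measurable fun x => ν ((x * ·) ⁻¹' s) :=
  measurable_measure_prodMk_left (measurable_mul hs)

theorem mconv_apply_pos {μ ν : Measure M} [SFinite ν] {s t : Set M} (hs : MeasurableSet s)
    (ht : 0 < μ t) (h : ∀ x ∈ t, 0 < ν ((x * ·) ⁻¹' s)) : 0 < (μ ∗ₘ ν) s := by
  rw [mconv_apply μ ν hs, lintegral_pos_iff_support (measurable_measure_preimage_mul_left ν hs)]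
  exact ht.trans_le (measure_mono fun x hx => (h x hx).ne')

theorem mul_le_mconv_apply (μ ν : Measure M) [SFinite ν] {s t u : Set M} (hu : MeasurableSet u)
    (h : s * t ⊆ u) : μ s * ν t ≤ (μ ∗ₘ ν) u := by
  rw [Measure.mconv, Measure.map_apply measurable_mul hu, ← Measure.prod_prod]
  exact measure_mono fun p hp => h (Set.mul_mem_mul hp.1 hp.2)

theorem MeasureTheory.Measure.AbsolutelyContinuous.mconv {μ₁ μ₂ ν₁ ν₂ : Measure M}
    [SFinite ν₂] (hμ : μ₁ ≪ μ₂) (hν : ν₁ ≪ ν₂) : μ₁ ∗ₘ ν₁ ≪ μ₂ ∗ₘ ν₂ :=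
  (hμ.prod hν).map measurable_mul

end Convolution

theorem IsIrreducibleWalk.exists_convPow_pos {M : Type*} [Monoid M] [TopologicalSpace M]
    [ContinuousMul M] [MeasurableSpace M] [OpensMeasurableSpace M] [MeasurableMul₂ M]
    {v : Measure M} [IsProbabilityMeasure v] (hirr : IsIrreducibleWalk v) {O : Set M}
    (hO : IsOpen O) (hne : O.Nonempty) : ∃ n, 1 ≤ n ∧ 0 < convPow v n O := by
  let T : Set M := {x | ∀ U, IsOpen U → x ∈ U → ∃ n, 1 ≤ n ∧ 0 < convPow v n U}
  have hT_closed : IsClosed T := by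
    refine isOpen_compl_iff.1 (isOpen_iff_forall_mem_open.2 fun x hx => ?_)
    obtain ⟨U, hU, hxU, hUT⟩ :
        ∃ U, IsOpen U ∧ x ∈ U ∧ ¬∃ n, 1 ≤ n ∧ 0 < convPow v n U := by
      simpa [T] using hx
    exact ⟨U, fun y hyU hyT => hUT (hyT U hU hyU), hU, hxU⟩
  have hT_mul : ∀ a ∈ T, ∀ b ∈ T, a * b ∈ T := by
    intro a ha b hb U hU habU
    obtain ⟨U₁, U₂, hU₁, hU₂, haU₁, hbU₂, hU₁₂⟩ :=
      isOpen_prod_iff.1 (hU.preimage continuous_mul) a b habU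
    obtain ⟨n, hn, hn_pos⟩ := ha U₁ hU₁ haU₁
    obtain ⟨m, hm, hm_pos⟩ := hb U₂ hU₂ hbU₂
    refine ⟨n + m, by omega, ?_⟩
    rw [convPow_add]
    refine (ENNReal.mul_pos hn_pos.ne' hm_pos.ne').trans_le
      (mul_le_mconv_apply _ _ hU.measurableSet ?_)
    rintro _ ⟨x, hx, y, hy, rfl⟩
    exact hU₁₂ (Set.mk_mem_prod hx hy)
  have hT_supp : msupport v ⊆ T := fun x hx U hU hxU =>
    ⟨1, le_rfl, by rw [convPow_succ, convPow_zero, Measure.dirac_one_mconv]; exact hx U hU hxU⟩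
  obtain ⟨x, hx⟩ := hne
  have hxT : x ∈ T := hirr T hT_closed hT_mul hT_supp ▸ Set.mem_univ x
  exact hxT O hO hx

section LeftInvariant

variable {G : Type*} [Group G] [MeasurableSpace G] [MeasurableMul₂ G] [MeasurableInv G]
  (μ : Measure G) [SFinite μ]

theorem measurable_measure_inter_preimage_inv_mul {P Q : Set G} (hP : MeasurableSet P)
    (hQ : MeasurableSet Q) : Measurable fun w => μ (P ∩ (fun y => y⁻¹ * w) ⁻¹' Q) :=
  measurable_measure_prodMk_right
    ((measurable_fst hP).inter ((measurable_fst.inv.mul measurable_snd) hQ))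

variable [μ.IsMulLeftInvariant]

theorem mconv_absolutelyContinuous_left (ν : Measure G) [SFinite ν] : μ ∗ₘ ν ≪ μ := by
  refine Measure.AbsolutelyContinuous.mk fun s hs hμs => ?_
  rw [Measure.mconv, Measure.map_apply measurable_mul hs,
    Measure.prod_apply_symm (measurable_mul hs)]
  have hnull (y : G) : μ ((· * y) ⁻¹' s) = 0 := (measure_mul_right_null μ y).2 hμs
  simp [Set.preimage_preimage, hnull]

theorem mconv_restrict_eq_withDensity {P Q : Set G} (hP : MeasurableSet P)
    (hQ : MeasurableSet Q) :
    μ.restrict P ∗ₘ μ.restrict Q =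
      μ.withDensity fun w => μ (P ∩ (fun y => y⁻¹ * w) ⁻¹' Q) := by
  ext B hB
  set S : Set (G × G) := {p | p.1 ∈ P ∧ p.1⁻¹ * p.2 ∈ Q ∧ p.2 ∈ B}
  have hS : MeasurableSet S :=
    (measurable_fst hP).inter (((measurable_fst.inv.mul measurable_snd) hQ).inter
      (measurable_snd hB))
  have hshear : (fun p : G × G => (p.1, p.1 * p.2)) ⁻¹' S =
      (fun p : G × G => p.1 * p.2) ⁻¹' B ∩ P ×ˢ Q := by
    ext p
    simp [S, and_comm, and_assoc]
  rw [Measure.mconv, Measure.map_apply measurable_mul hB, Measure.prod_restrict,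
    Measure.restrict_apply (measurable_mul hB), ← hshear,
    (measurePreserving_prod_mul μ μ).measure_preimage hS.nullMeasurableSet,
    Measure.prod_apply_symm hS, withDensity_apply _ hB, ← lintegral_indicator hB]
  refine lintegral_congr fun w => ?_
  by_cases hw : w ∈ B <;> simp [S, hw, Set.preimage, Set.inter_def]

end LeftInvariant

theorem MeasureTheory.Measure.restrict_absolutelyContinuous_withDensity {α : Type*}
    [MeasurableSpace α] (μ : Measure α) {f : α → ℝ≥0∞} (hf : Measurable f) {s : Set α}
    (hs : MeasurableSet s) (hfs : ∀ x ∈ s, f x ≠ 0) : μ.restrict s ≪ μ.withDensity f := by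
  refine (withDensity_absolutelyContinuous' hf.aemeasurable
    ((ae_restrict_iff' hs).2 (ae_of_all _ hfs))).trans ?_
  rw [← restrict_withDensity hs]
  exact absolutelyContinuous_of_le restrict_le_self

theorem exists_isCompact_isClosed_restrict_absolutelyContinuous {α : Type*} [TopologicalSpace α]
    [R1Space α] [MeasurableSpace α] [BorelSpace α] {μ ν : Measure α} [SigmaFinite μ]
    [SigmaFinite ν] [μ.InnerRegular] (h : ¬ ν ⟂ₘ μ) :
    ∃ K, IsCompact K ∧ IsClosed K ∧ μ K ≠ 0 ∧ μ.restrict K ≪ ν := by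
  set S := {x | ν.rnDeriv μ x ≠ 0}
  have hS : MeasurableSet S := Measure.measurable_rnDeriv ν μ (measurableSet_singleton 0).compl
  have hμS : 0 < μ S := by
    rw [← Measure.rnDeriv_eq_zero, Filter.EventuallyEq, ae_iff] at h
    exact pos_iff_ne_zero.2 h
  have hSν : μ.restrict S ≪ ν := Measure.AbsolutelyContinuous.mk fun A hA hνA => by
    rw [Measure.restrict_apply hA, measure_eq_zero_iff_ae_notMem]
    filter_upwards [Measure.ae_rnDeriv_ne_zero_imp_of_ae μ (measure_eq_zero_iff_ae_notMem.1 hνA)]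
      with x hx hxA using hx hxA.2 hxA.1
  obtain ⟨K, hKS, hK, hμK⟩ := hS.exists_lt_isCompact hμS
  refine ⟨closure K, hK.closure, isClosed_closure,
    (hμK.trans_le (measure_mono subset_closure)).ne', ?_⟩
  exact (Measure.absolutelyContinuous_of_le
    (Measure.restrict_mono (hK.closure_subset_measurableSet hS hKS) le_rfl)).trans hSν

section Haar

variable {G : Type*} [TopologicalSpace G] [Group G] [IsTopologicalGroup G] [LocallyCompactSpace G]
  [MeasurableSpace G] [BorelSpace G] (μ : Measure G) [μ.IsHaarMeasure]

theorem eventually_nhds_one_measure_smul_inter_pos [μ.InnerRegularCompactLTTop] {K : Set G}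
    (hK : IsCompact K) (hK' : IsClosed K) (hμK : μ K ≠ 0) :
    ∀ᶠ g in 𝓝 (1 : G), 0 < μ (g • K ∩ K) := by
  filter_upwards [eventually_nhds_one_measure_smul_sdiff_lt hK hK' hμK (μ := μ)] with g hg
  refine pos_iff_ne_zero.2 fun h0 => hg.ne ?_
  rw [← measure_smul μ g K, ← measure_inter_add_sdiff (g • K) hK'.measurableSet, h0,
    zero_add]

theorem exists_isOpen_restrict_absolutelyContinuous_mconv [SecondCountableTopology G] {K : Set G}
    (hK : IsCompact K) (hK' : IsClosed K) (hμK : μ K ≠ 0) :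
    ∃ U, IsOpen U ∧ U.Nonempty ∧ μ.restrict U ≪ μ.restrict K ∗ₘ μ.restrict K := by
  set θ := fun w => μ (K ∩ (fun y => y⁻¹ * w) ⁻¹' K)
  have hθ : μ.restrict K ∗ₘ μ.restrict K = μ.withDensity θ :=
    mconv_restrict_eq_withDensity μ hK'.measurableSet hK'.measurableSet
  obtain ⟨w₀, hw₀⟩ : ∃ w₀, θ w₀ ≠ 0 := by
    have hpos : 0 < (μ.restrict K ∗ₘ μ.restrict K) Set.univ :=
      lt_of_lt_of_le (by simpa [pos_iff_ne_zero] using hμK)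
        (mul_le_mconv_apply _ _ MeasurableSet.univ (Set.subset_univ (K * K)))
    by_contra! h
    rw [hθ, show θ = 0 from funext h, withDensity_zero] at hpos
    simp at hpos
  have hR : IsClosed ((fun y => y⁻¹ * w₀) ⁻¹' K) :=
    hK'.preimage (continuous_inv.mul continuous_const)
  obtain ⟨V, hV1, hV⟩ := (eventually_nhds_one_measure_smul_inter_pos μ (hK.inter_right hR)
    (hK'.inter hR) hw₀).exists_mem
  obtain ⟨V', hV'V, hV', h1V'⟩ := mem_nhds_iff.1 hV1
  refine ⟨(· * w₀⁻¹) ⁻¹' V', hV'.preimage (continuous_mul_const _),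
    ⟨w₀, by simpa using h1V'⟩, ?_⟩
  rw [hθ]
  refine μ.restrict_absolutelyContinuous_withDensity
    (measurable_measure_inter_preimage_inv_mul μ hK'.measurableSet hK'.measurableSet)
    (hV'.measurableSet.preimage (measurable_mul_const _)) fun w hw => ?_
  -- with `R = K ∩ w₀ K⁻¹` and `g = w w₀⁻¹`, we have `g • R ∩ R ⊆ K ∩ w K⁻¹`
  refine ((hV _ (hV'V hw)).trans_le (measure_mono ?_)).ne'
  rintro _ ⟨⟨r, ⟨-, hr⟩, rfl⟩, hrK, -⟩
  refine ⟨hrK, ?_⟩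
  change ((w * w₀⁻¹) • r)⁻¹ * w ∈ K
  rwa [smul_eq_mul, mul_inv_rev, mul_inv_rev, inv_inv, mul_assoc, inv_mul_cancel_right]

end Haar

theorem IsMeasIrreducible.mono_ac {E : Type*} [TopologicalSpace E] [Monoid E]
    [MeasurableSpace E] {μ κ v : Measure E} (h : IsMeasIrreducible μ v) (hκμ : κ ≪ μ) :
    IsMeasIrreducible κ v :=
  fun x A hA hκA => h x A hA (pos_iff_ne_zero.2 fun hμA => hκA.ne' (hκμ hμA))

section Walk

variable {G : Type*} [TopologicalSpace G] [Group G] [IsTopologicalGroup G]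
  [SecondCountableTopology G] [MeasurableSpace G] [BorelSpace G] (μ : Measure G)
  [μ.IsMulLeftInvariant]

theorem exists_isOpen_forall_measure_inter_preimage_mul_pos {U A : Set G} (hU : IsOpen U)
    (hUne : U.Nonempty) (hA : MeasurableSet A) (hμA : μ A ≠ 0) :
    ∃ O, IsOpen O ∧ O.Nonempty ∧ ∀ g ∈ O, 0 < μ (U ∩ (g * ·) ⁻¹' A) := by
  obtain ⟨a, ha⟩ := Measure.nonempty_support (μ := μ.restrict A) (by simpa using hμA)
  obtain ⟨u, hu⟩ := hUne
  refine ⟨(fun g => g⁻¹ * a) ⁻¹' U, hU.preimage (by fun_prop), ⟨a * u⁻¹, by simpa⟩,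
    fun g hg => ?_⟩
  have hgU : (g⁻¹ * ·) ⁻¹' U ∈ 𝓝 a := (hU.preimage (continuous_const_mul _)).mem_nhds hg
  have hpos := (Measure.mem_support_iff_forall a).1 ha _ hgU
  rw [Measure.restrict_apply' hA, ← measure_preimage_mul μ g] at hpos
  convert hpos using 2
  ext x
  simp

theorem isMeasIrreducible_of_restrict_absolutelyContinuous_convPow {v : Measure G}
    [IsProbabilityMeasure v] (hirr : IsIrreducibleWalk v) {U : Set G} {N : ℕ} (hU : IsOpen U)
    (hUne : U.Nonempty) (hUN : μ.restrict U ≪ convPow v N) : IsMeasIrreducible μ v := by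
  intro x A hA hμA
  obtain ⟨O, hO, ⟨g, hg⟩, hOA⟩ :=
    exists_isOpen_forall_measure_inter_preimage_mul_pos μ hU hUne hA hμA.ne'
  obtain ⟨m, hm, hmO⟩ :=
    hirr.exists_convPow_pos (hO.preimage (continuous_const_mul x)) ⟨x⁻¹ * g, by simpa⟩
  refine ⟨m + N, by omega, ?_⟩
  rw [convPow_add]
  refine mconv_apply_pos (measurable_const_mul x hA) hmO fun y hy =>
    pos_iff_ne_zero.2 fun hN => (hOA (x * y) hy).ne' ?_
  have := hUN hN
  rw [Measure.restrict_apply' hU.measurableSet, Set.inter_comm] at this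
  convert this using 3
  ext z
  simp [mul_assoc]

theorem IsMeasIrreducible.absolutelyContinuous [SFinite μ] [NeZero μ] {κ v : Measure G}
    [IsProbabilityMeasure v] (h : IsMeasIrreducible κ v) : κ ≪ μ := by
  refine Measure.AbsolutelyContinuous.mk fun t ht hμt => ?_
  have hnull (n : ℕ) : ∀ᵐ x ∂μ, convPow v n ((x * ·) ⁻¹' t) = 0 := by
    refine (lintegral_eq_zero_iff (measurable_measure_preimage_mul_left _ ht)).1 ?_
    rw [← mconv_apply μ _ ht]
    exact mconv_absolutelyContinuous_left μ _ hμt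
  have := ae_neBot.2 (NeZero.ne μ)
  obtain ⟨x, hx⟩ := (ae_all_iff.2 hnull).exists
  by_contra hκt
  obtain ⟨n, -, hn⟩ := h x t ht (pos_iff_ne_zero.2 hκt)
  exact hn.ne' (hx n)

end Walk

theorem isMeasIrreducible_of_isHaarMeasure {G : Type*} [TopologicalSpace G] [Group G]
    [IsTopologicalGroup G] [LocallyCompactSpace G] [SecondCountableTopology G] [MeasurableSpace G]
    [BorelSpace G] (μ : Measure G) [μ.IsHaarMeasure] {v : Measure G} [IsProbabilityMeasure v]
    (hspread : ∃ n, ¬ convPow v n ⟂ₘ μ) (hirr : IsIrreducibleWalk v) :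
    IsMeasIrreducible μ v := by
  obtain ⟨n, hn⟩ := hspread
  obtain ⟨K, hK, hK', hμK, hKv⟩ := exists_isCompact_isClosed_restrict_absolutelyContinuous hn
  obtain ⟨U, hU, hUne, hUK⟩ := exists_isOpen_restrict_absolutelyContinuous_mconv μ hK hK' hμK
  refine isMeasIrreducible_of_restrict_absolutelyContinuous_convPow μ hirr hU hUne
    (N := n + n) (hUK.trans ?_)
  rw [convPow_add]
  exact hKv.mconv hKv

theorem haar_is_maximal_irreducibility_measure
    {E : Type*} [TopologicalSpace E] [Group E] [IsTopologicalGroup E]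
    [LocallyCompactSpace E] [SecondCountableTopology E]
    [MeasurableSpace E] [BorelSpace E]
    (π : Measure E) (hπ0 : π ≠ 0) (hπreg : π.Regular)
    (hπinv : π.IsMulRightInvariant)
    (v : Measure E) [IsProbabilityMeasure v]
    (hspread : ∃ n : ℕ, 1 ≤ n ∧ ¬ (convPow v n).MutuallySingular π)
    (hirr : IsIrreducibleWalk v) :
    IsMeasIrreducible π v ∧
      IsMeasIrreducible (Measure.map (fun x => x⁻¹) π) v ∧
      ∀ μ : Measure E, μ ≠ 0 → SigmaFinite μ → IsMeasIrreducible μ v → μ ≪ π := by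
  have : NeZero π.inv :=
    ⟨fun h => hπ0 (by rw [← π.inv_inv, h, Measure.inv, Measure.map_zero])⟩
  have : π.inv.IsHaarMeasure := {}
  have hπ_ac : π ≪ π.inv := by
    simpa only [Measure.inv_inv] using inv_absolutelyContinuous π.inv
  have hinv_ac : π.inv ≪ π :=
    (quasiMeasurePreserving_inv_of_right_invariant π).absolutelyContinuous
  obtain ⟨n, -, hn⟩ := hspread
  have hirr_inv : IsMeasIrreducible π.inv v :=
    isMeasIrreducible_of_isHaarMeasure π.inv ⟨n, fun h => hn (h.mono_ac .rfl hπ_ac)⟩ hirr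
  exact ⟨hirr_inv.mono_ac hπ_ac, hirr_inv,
    fun μ _ _ hμ => (hμ.absolutelyContinuous π.inv).trans hinv_ac⟩
end
end

section
/- Let r > 0 and suppose the measure π₀ = h₁·π is r-invariant for X, where h₁ : E → [0,∞] is Borel and locally π-integrable. Let w : E → [0,∞) be a continuous, compactly supported function that is not identically 0, and define h(x) = ∫_E w(y)·h₁(yx) π(dy). Then h is finite everywhere, continuous on E, not identically zero, and the measure μ = h·π is r-invariant for X. -/
open MeasureTheory ENNReal

noncomputable section

/-- A nonzero measure `ν` is `r`-invariant for the right random walk with law `v`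
if `ν = r · (ν * v)`. -/
def IsRInvMeasure {E : Type*} [Monoid E] [MeasurableSpace E]
    (r : ℝ) (v ν : Measure E) : Prop :=
  ν ≠ 0 ∧ ν = ENNReal.ofReal r • mconv ν v

/-!
By right invariance `h(x) = ∫ w(z x⁻¹) h₁(z) dπ(z)`. For `x` in a compact set `U` the integrand is
dominated by `(sup w) · 1_{supp w · U} · h₁`, which is integrable because `h₁` is locally
integrable: this gives finiteness of `h` and, by dominated convergence (`h₁ < ∞` a.e.),
continuity. Fubini and right invariance give `∫ h dπ = (∫ w(x⁻¹) dπ(x)) (∫ h₁ dπ)`; both factors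
are nonzero since a nonzero regular right Haar measure charges open sets. Finally, `g·π` is
`r`-invariant iff `g(x) = r ∫ g(x b⁻¹) v(db)` for π-a.e. `x`; smoothing commutes with
`g ↦ ∫ g(· b⁻¹) dv` and does not see π-null sets, so `h` satisfies this identity everywhere.
-/

open scoped NNReal Pointwise

section Convolution

variable {E : Type*} [Group E] [MeasurableSpace E] [MeasurableMul₂ E]

theorem lintegral_mconv (μ ν : Measure E) [SFinite ν] {f : E → ℝ≥0∞} (hf : Measurable f) :
    ∫⁻ z, f z ∂mconv μ ν = ∫⁻ x, ∫⁻ b, f (x * b) ∂ν ∂μ := by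
  rw [mconv, lintegral_map hf measurable_mul, lintegral_prod _ (by fun_prop)]

variable [MeasurableInv E]

theorem mconv_withDensity (π : Measure E) [SFinite π] [π.IsMulRightInvariant]
    (v : Measure E) [SFinite v] {g : E → ℝ≥0∞} (hg : Measurable g) :
    mconv (π.withDensity g) v = π.withDensity fun x => ∫⁻ b, g (x * b⁻¹) ∂v := by
  refine Measure.ext_of_lintegral _ fun f hf => ?_
  have hG : Measurable fun x => ∫⁻ b, g (x * b⁻¹) ∂v := by fun_prop
  calc ∫⁻ z, f z ∂mconv (π.withDensity g) v
      = ∫⁻ x, g x * ∫⁻ b, f (x * b) ∂v ∂π := by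
        rw [lintegral_mconv _ _ hf, lintegral_withDensity_eq_lintegral_mul _ hg (by fun_prop)]
        rfl
    _ = ∫⁻ b, ∫⁻ x, g x * f (x * b) ∂π ∂v := by
        rw [← lintegral_lintegral_swap (by fun_prop)]
        exact lintegral_congr fun x => (lintegral_const_mul _ (by fun_prop)).symm
    _ = ∫⁻ b, ∫⁻ x, g (x * b⁻¹) * f x ∂π ∂v := by
        refine lintegral_congr fun b => ?_
        simpa only [mul_inv_cancel_right] using
          lintegral_mul_right_eq_self (μ := π) (fun x => g (x * b⁻¹) * f x) b
    _ = ∫⁻ x, (∫⁻ b, g (x * b⁻¹) ∂v) * f x ∂π := by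
        rw [lintegral_lintegral_swap (by fun_prop)]
        exact lintegral_congr fun x => lintegral_mul_const _ (by fun_prop)
    _ = ∫⁻ z, f z ∂π.withDensity fun x => ∫⁻ b, g (x * b⁻¹) ∂v := by
        rw [lintegral_withDensity_eq_lintegral_mul _ hG hf]
        rfl

theorem withDensity_eq_smul_mconv_iff (π : Measure E) [SigmaFinite π] [π.IsMulRightInvariant]
    (v : Measure E) [SFinite v] {g : E → ℝ≥0∞} (hg : Measurable g) (c : ℝ≥0∞) :
    π.withDensity g = c • mconv (π.withDensity g) v ↔
      g =ᵐ[π] fun x => c * ∫⁻ b, g (x * b⁻¹) ∂v := by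
  rw [mconv_withDensity π v hg, ← withDensity_smul c (by fun_prop),
    withDensity_eq_iff_of_sigmaFinite hg.aemeasurable (by fun_prop)]
  rfl

end Convolution

def smoothing {E : Type*} [Mul E] [MeasurableSpace E] (π : Measure E) (W : E → ℝ≥0)
    (f : E → ℝ≥0∞) (x : E) : ℝ≥0∞ :=
  ∫⁻ y, W y * f (y * x) ∂π

section MeasurableSmoothing

variable {E : Type*} [Group E] [MeasurableSpace E] [MeasurableMul₂ E]
  {π : Measure E} {W : E → ℝ≥0} {f g : E → ℝ≥0∞}

theorem smoothing_eq_lintegral_mul_inv [π.IsMulRightInvariant] (x : E) :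
    smoothing π W f x = ∫⁻ z, W (z * x⁻¹) * f z ∂π := by
  simpa only [smoothing, mul_inv_cancel_right] using
    lintegral_mul_right_eq_self (μ := π) (fun z => W (z * x⁻¹) * f z) x

theorem smoothing_congr_ae [π.IsMulRightInvariant] (hfg : f =ᵐ[π] g) :
    smoothing π W f = smoothing π W g := by
  funext x
  have hx : f ∘ (· * x) =ᵐ[π] g ∘ (· * x) :=
    hfg.comp_tendsto (measurePreserving_mul_right π x).quasiMeasurePreserving.tendsto_ae
  refine lintegral_congr_ae ?_
  filter_upwards [hx] with y hy using congrArg ((W y : ℝ≥0∞) * ·) hy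

theorem measurable_smoothing [SFinite π] (hW : Measurable W) (hf : Measurable f) :
    Measurable (smoothing π W f) :=
  Measurable.lintegral_prod_right (f := fun x y => W y * f (y * x)) (by fun_prop)

theorem smoothing_const_mul (hW : Measurable W) (hf : Measurable f) (c : ℝ≥0∞) (x : E) :
    smoothing π W (fun z => c * f z) x = c * smoothing π W f x := by
  rw [smoothing, smoothing, ← lintegral_const_mul _ (by fun_prop)]
  exact lintegral_congr fun y => mul_left_comm _ _ _

variable [MeasurableInv E]

theorem smoothing_lintegral_mul_inv [SFinite π] (v : Measure E) [SFinite v] (hW : Measurable W)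
    (hf : Measurable f) (x : E) :
    smoothing π W (fun z => ∫⁻ b, f (z * b⁻¹) ∂v) x = ∫⁻ b, smoothing π W f (x * b⁻¹) ∂v := by
  simp only [smoothing, mul_assoc]
  rw [← lintegral_lintegral_swap (by fun_prop)]
  exact lintegral_congr fun y => (lintegral_const_mul _ (by fun_prop)).symm

theorem lintegral_smoothing [SFinite π] [π.IsMulRightInvariant] (hW : Measurable W)
    (hf : Measurable f) :
    ∫⁻ x, smoothing π W f x ∂π = (∫⁻ x, W x⁻¹ ∂π) * ∫⁻ z, f z ∂π := by
  have htranslate (z : E) : ∫⁻ x, (W (z * x⁻¹) : ℝ≥0∞) ∂π = ∫⁻ x, W x⁻¹ ∂π := by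
    simpa only [mul_inv_rev, mul_inv_cancel_left] using
      (lintegral_mul_right_eq_self (μ := π) (fun x => (W (z * x⁻¹) : ℝ≥0∞)) z).symm
  calc ∫⁻ x, smoothing π W f x ∂π = ∫⁻ x, ∫⁻ z, W (z * x⁻¹) * f z ∂π ∂π :=
        lintegral_congr smoothing_eq_lintegral_mul_inv
    _ = ∫⁻ z, (∫⁻ x, (W (z * x⁻¹) : ℝ≥0∞) ∂π) * f z ∂π := by
        rw [lintegral_lintegral_swap (by fun_prop)]
        exact lintegral_congr fun z => lintegral_mul_const _ (by fun_prop)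
    _ = (∫⁻ x, W x⁻¹ ∂π) * ∫⁻ z, f z ∂π := by
        simp only [htranslate]
        exact lintegral_const_mul _ hf

end MeasurableSmoothing

section RInvariance

variable {E : Type*} [Group E] [MeasurableSpace E] [MeasurableMul₂ E] [MeasurableInv E]
  {π : Measure E} [SigmaFinite π] [π.IsMulRightInvariant] (v : Measure E) [SFinite v]
  {W : E → ℝ≥0} {f : E → ℝ≥0∞}

theorem smoothing_eq_mul_lintegral_of_ae_eq (hW : Measurable W) (hf : Measurable f) {c : ℝ≥0∞}
    (hfc : f =ᵐ[π] fun x => c * ∫⁻ b, f (x * b⁻¹) ∂v) (x : E) :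
    smoothing π W f x = c * ∫⁻ b, smoothing π W f (x * b⁻¹) ∂v := by
  rw [congrFun (smoothing_congr_ae hfc) x, smoothing_const_mul hW (by fun_prop),
    smoothing_lintegral_mul_inv v hW hf]

theorem withDensity_smoothing_eq_smul_mconv (hW : Measurable W) (hf : Measurable f) {c : ℝ≥0∞}
    (hfc : π.withDensity f = c • mconv (π.withDensity f) v) :
    π.withDensity (smoothing π W f) = c • mconv (π.withDensity (smoothing π W f)) v :=
  (withDensity_eq_smul_mconv_iff π v (measurable_smoothing hW hf) c).2 <| .of_forall <|
    smoothing_eq_mul_lintegral_of_ae_eq v hW hf ((withDensity_eq_smul_mconv_iff π v hf c).1 hfc)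

end RInvariance

theorem withDensity_ne_zero_iff {X : Type*} [MeasurableSpace X] {μ : Measure X} {f : X → ℝ≥0∞}
    (hf : Measurable f) : μ.withDensity f ≠ 0 ↔ ∫⁻ x, f x ∂μ ≠ 0 := by
  rw [Ne, Ne, withDensity_eq_zero_iff hf.aemeasurable, lintegral_eq_zero_iff hf]

theorem ae_lt_top_of_forall_isCompact_setLIntegral_lt_top {X : Type*} [TopologicalSpace X]
    [SigmaCompactSpace X] [MeasurableSpace X] {μ : Measure X} {f : X → ℝ≥0∞} (hf : Measurable f)
    (hloc : ∀ K, IsCompact K → ∫⁻ z in K, f z ∂μ < ∞) :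
    ∀ᵐ z ∂μ, f z < ∞ := by
  rw [← Measure.restrict_univ (μ := μ), ← iUnion_compactCovering, ae_restrict_iUnion_iff]
  exact fun n => ae_lt_top hf (hloc _ (isCompact_compactCovering X n)).ne

section TopologicalSmoothing

variable {E : Type*} [TopologicalSpace E] [Group E] [IsTopologicalGroup E]
  [MeasurableSpace E] {π : Measure E} {W : E → ℝ≥0} {f : E → ℝ≥0∞}

theorem exists_lintegral_lt_top_bound_mul_inv (hW : Continuous W) (hWs : HasCompactSupport W)
    (hf : ∀ K, IsCompact K → ∫⁻ z in K, f z ∂π < ∞) {U : Set E} (hU : IsCompact U) :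
    ∃ F : E → ℝ≥0∞, ∫⁻ z, F z ∂π < ∞ ∧ ∀ x ∈ U, ∀ z, W (z * x⁻¹) * f z ≤ F z := by
  obtain ⟨C, hC⟩ := hW.bddAbove_range_of_hasCompactSupport hWs
  refine ⟨(tsupport W * U).indicator fun z => C * f z, ?_, fun x hx z => ?_⟩
  · calc ∫⁻ z, (tsupport W * U).indicator (fun z => C * f z) z ∂π
        ≤ ∫⁻ z in tsupport W * U, C * f z ∂π := lintegral_indicator_le _ _
      _ = C * ∫⁻ z in tsupport W * U, f z ∂π := lintegral_const_mul' _ _ ENNReal.coe_ne_top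
      _ < ∞ := ENNReal.mul_lt_top ENNReal.coe_lt_top (hf _ (hWs.isCompact.mul hU))
  · by_cases hz : z * x⁻¹ ∈ tsupport W
    · have hzU : z ∈ tsupport W * U := by
        simpa only [inv_mul_cancel_right] using Set.mul_mem_mul hz hx
      rw [Set.indicator_of_mem hzU]
      gcongr
      exact_mod_cast hC ⟨_, rfl⟩
    · simp [image_eq_zero_of_notMem_tsupport hz]

variable [BorelSpace E]

theorem isOpenPosMeasure_of_mulRightInvariant_of_regular [π.Regular] [NeZero π]
    [π.IsMulRightInvariant] : π.IsOpenPosMeasure := by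
  have : NeZero π.inv :=
    ⟨fun h => NeZero.ne π (by rw [← Measure.inv_inv π, h]; exact Measure.map_zero _)⟩
  simpa only [Measure.inv_inv] using Measure.IsOpenPosMeasure.inv (μ := π.inv)

theorem lintegral_apply_inv_ne_zero [π.Regular] [NeZero π] [π.IsMulRightInvariant]
    (hW : Continuous W) (hW0 : W ≠ 0) : ∫⁻ x, W x⁻¹ ∂π ≠ 0 := by
  have := isOpenPosMeasure_of_mulRightInvariant_of_regular (π := π)
  have hWinv : Continuous fun x => (W x⁻¹ : ℝ≥0∞) := by fun_prop
  rw [Ne, lintegral_eq_zero_iff hWinv.measurable, hWinv.ae_eq_iff_eq π continuous_zero]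
  exact fun h => hW0 <| funext fun x => by simpa using congrFun h x⁻¹

variable [SecondCountableTopology E]

theorem smoothing_lt_top [π.IsMulRightInvariant] (hW : Continuous W) (hWs : HasCompactSupport W)
    (hf : ∀ K, IsCompact K → ∫⁻ z in K, f z ∂π < ∞) (x : E) : smoothing π W f x < ∞ := by
  obtain ⟨F, hF, hbound⟩ :=
    exists_lintegral_lt_top_bound_mul_inv hW hWs hf (isCompact_singleton (x := x))
  rw [smoothing_eq_lintegral_mul_inv]
  exact (lintegral_mono (hbound x rfl)).trans_lt hF

theorem continuous_smoothing [LocallyCompactSpace E] [π.IsMulRightInvariant] (hW : Continuous W)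
    (hWs : HasCompactSupport W) (hf : Measurable f)
    (hloc : ∀ K, IsCompact K → ∫⁻ z in K, f z ∂π < ∞) : Continuous (smoothing π W f) := by
  have hform : smoothing π W f = fun x => ∫⁻ z, W (z * x⁻¹) * f z ∂π :=
    funext smoothing_eq_lintegral_mul_inv
  rw [hform, continuous_iff_continuousAt]
  intro x₀
  obtain ⟨U, hU, hUx₀⟩ := exists_compact_mem_nhds x₀
  obtain ⟨F, hF, hbound⟩ := exists_lintegral_lt_top_bound_mul_inv hW hWs hloc hU
  refine tendsto_lintegral_filter_of_dominated_convergence F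
    (.of_forall fun x => by fun_prop) ?_ hF.ne ?_
  · filter_upwards [hUx₀] with x hx using .of_forall (hbound x hx)
  · filter_upwards [ae_lt_top_of_forall_isCompact_setLIntegral_lt_top hf hloc] with z hz
    have hcont : Continuous fun x => (W (z * x⁻¹) : ℝ≥0∞) := by fun_prop
    exact ENNReal.Tendsto.mul_const hcont.continuousAt (Or.inr hz.ne)

end TopologicalSmoothing

theorem smoothed_density_rInvariant_general
    {E : Type*} [TopologicalSpace E] [Group E] [IsTopologicalGroup E]
    [LocallyCompactSpace E] [SecondCountableTopology E]
    [MeasurableSpace E] [BorelSpace E]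
    (π : Measure E) (hπreg : π.Regular)
    (hπinv : π.IsMulRightInvariant)
    (v : Measure E) [IsProbabilityMeasure v]
    (r : ℝ)
    (h₁ : E → ℝ≥0∞) (hh₁meas : Measurable h₁)
    (hh₁loc : ∀ K : Set E, IsCompact K → ∫⁻ x in K, h₁ x ∂π < ∞)
    (hπ₀inv : IsRInvMeasure r v (π.withDensity h₁))
    (w : E → ℝ) (hwcont : Continuous w) (hwsupp : HasCompactSupport w)
    (hwpos : ∀ x, 0 ≤ w x) (hwne : ∃ x, w x ≠ 0) :
    (∀ x, (∫⁻ y, ENNReal.ofReal (w y) * h₁ (y * x) ∂π) < ∞) ∧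
      Continuous (fun x => ∫⁻ y, ENNReal.ofReal (w y) * h₁ (y * x) ∂π) ∧
      (∃ x, (∫⁻ y, ENNReal.ofReal (w y) * h₁ (y * x) ∂π) ≠ 0) ∧
      IsRInvMeasure r v
        (π.withDensity (fun x => ∫⁻ y, ENNReal.ofReal (w y) * h₁ (y * x) ∂π)) := by
  -- `ENNReal.ofReal (w y)` is by definition the coercion of `(w y).toNNReal`.
  set W : E → ℝ≥0 := fun y => (w y).toNNReal
  have hW : Continuous W := continuous_real_toNNReal.comp hwcont
  have hWs : HasCompactSupport W := hwsupp.comp_left Real.toNNReal_zero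
  have hW0 : W ≠ 0 := fun h => by
    obtain ⟨x, hx⟩ := hwne
    exact hx (le_antisymm (Real.toNNReal_eq_zero.1 (congrFun h x)) (hwpos x))
  have hh₁0 : ∫⁻ z, h₁ z ∂π ≠ 0 := (withDensity_ne_zero_iff hh₁meas).1 hπ₀inv.1
  have : NeZero π := ⟨fun h => hh₁0 (by simp [h])⟩
  have hint : ∫⁻ x, smoothing π W h₁ x ∂π ≠ 0 := by
    rw [lintegral_smoothing hW.measurable hh₁meas]
    exact mul_ne_zero (lintegral_apply_inv_ne_zero hW hW0) hh₁0
  refine ⟨smoothing_lt_top hW hWs hh₁loc, continuous_smoothing hW hWs hh₁meas hh₁loc,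
    ?_, ?_, withDensity_smoothing_eq_smul_mconv v hW.measurable hh₁meas hπ₀inv.2⟩
  · by_contra! h
    exact hint ((lintegral_congr h).trans lintegral_zero)
  · exact (withDensity_ne_zero_iff (measurable_smoothing hW.measurable hh₁meas)).2 hint

theorem smoothed_density_rInvariant
    {E : Type*} [TopologicalSpace E] [Group E] [IsTopologicalGroup E]
    [LocallyCompactSpace E] [SecondCountableTopology E]
    [MeasurableSpace E] [BorelSpace E]
    (π : Measure E) (hπ0 : π ≠ 0) (hπreg : π.Regular)
    (hπinv : π.IsMulRightInvariant)
    (v : Measure E) [IsProbabilityMeasure v]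
    (r : ℝ) (hr : 0 < r)
    (h₁ : E → ℝ≥0∞) (hh₁meas : Measurable h₁)
    (hh₁loc : ∀ K : Set E, IsCompact K → ∫⁻ x in K, h₁ x ∂π < ∞)
    (hπ₀inv : IsRInvMeasure r v (π.withDensity h₁))
    (w : E → ℝ) (hwcont : Continuous w) (hwsupp : HasCompactSupport w)
    (hwpos : ∀ x, 0 ≤ w x) (hwne : ∃ x, w x ≠ 0) :
    (∀ x, (∫⁻ y, ENNReal.ofReal (w y) * h₁ (y * x) ∂π) < ∞) ∧
      Continuous (fun x => ∫⁻ y, ENNReal.ofReal (w y) * h₁ (y * x) ∂π) ∧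
      (∃ x, (∫⁻ y, ENNReal.ofReal (w y) * h₁ (y * x) ∂π) ≠ 0) ∧
      IsRInvMeasure r v
        (π.withDensity (fun x => ∫⁻ y, ENNReal.ofReal (w y) * h₁ (y * x) ∂π)) :=
  smoothed_density_rInvariant_general π hπreg hπinv v r h₁ hh₁meas hh₁loc hπ₀inv w hwcont hwsupp
    hwpos hwne
end
end

section
/- Let r > 0, let h : E → [0,∞] be a Borel function, and let μ = h·π be the measure with density h with respect to π. Then μ is r-invariant for X if and only if h is not π-almost everywhere zero and h(x) = r·(P̂h)(x) for π-almost every x ∈ E, where P̂h(x) = ∫ h(xy) v̂(dy) = ∫ h(xz⁻¹) v(dz). In particular, μ * v = (P̂h)·π. -/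
open MeasureTheory ENNReal

noncomputable section

/-! Right invariance of `π` lets Tonelli's theorem move the right translation `x ↦ x * y` of the
convolution onto the density: `(h·π) * v` has density `x ↦ ∫ h (x * z⁻¹) dv(z)`. Since `π` is
regular on a σ-compact group, it is σ-finite, so such densities are determined `π`-a.e., and the
equivalence becomes an a.e. identity between densities. -/

theorem mconv_eq_measure_mconv {M : Type*} [Monoid M] [MeasurableSpace M] (μ ν : Measure M) :
    mconv μ ν = μ ∗ₘ ν := rfl

section RightInvariant

variable {G : Type*} [Group G] [MeasurableSpace G] [MeasurableMul₂ G] [MeasurableInv G]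
  {π : Measure G} [SFinite π] [π.IsMulRightInvariant] {v : Measure G} [SFinite v]

theorem mconv_withDensity_eq_withDensity {h : G → ℝ≥0∞} (hh : Measurable h) :
    mconv (π.withDensity h) v = π.withDensity fun x => ∫⁻ z, h (x * z⁻¹) ∂v := by
  refine Measure.ext_of_lintegral _ fun f hf => ?_
  calc ∫⁻ y, f y ∂mconv (π.withDensity h) v
      = ∫⁻ x, ∫⁻ y, h x * f (x * y) ∂v ∂π := by
        rw [mconv_eq_measure_mconv, Measure.lintegral_mconv hf,
          lintegral_withDensity_eq_lintegral_mul _ hh (by fun_prop)]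
        refine lintegral_congr fun x => ?_
        rw [Pi.mul_apply, lintegral_const_mul _ (by fun_prop)]
    _ = ∫⁻ y, ∫⁻ x, h x * f (x * y) ∂π ∂v := lintegral_lintegral_swap (by fun_prop)
    _ = ∫⁻ y, ∫⁻ x, h (x * y⁻¹) * f x ∂π ∂v := by
        refine lintegral_congr fun y => ?_
        rw [← lintegral_mul_right_eq_self (fun x => h (x * y⁻¹) * f x) y]
        simp only [mul_inv_cancel_right]
    _ = ∫⁻ x, ∫⁻ y, h (x * y⁻¹) * f x ∂v ∂π := lintegral_lintegral_swap (by fun_prop)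
    _ = ∫⁻ y, f y ∂π.withDensity fun x => ∫⁻ z, h (x * z⁻¹) ∂v := by
        rw [lintegral_withDensity_eq_lintegral_mul _ (by fun_prop) hf]
        refine lintegral_congr fun x => ?_
        rw [Pi.mul_apply, lintegral_mul_const _ (by fun_prop)]

end RightInvariant

theorem withDensity_eq_smul_withDensity_iff {α : Type*} [MeasurableSpace α] {μ : Measure α}
    [SigmaFinite μ] {f g : α → ℝ≥0∞} (hf : Measurable f) (hg : Measurable g) (c : ℝ≥0∞) :
    μ.withDensity f = c • μ.withDensity g ↔ ∀ᵐ x ∂μ, f x = c * g x := by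
  rw [← withDensity_smul _ hg]
  exact withDensity_eq_iff_of_sigmaFinite hf.aemeasurable (hg.const_smul c).aemeasurable

theorem withDensity_rInvariant_iff_general
    {E : Type*} [TopologicalSpace E] [Group E] [IsTopologicalGroup E]
    [LocallyCompactSpace E] [SecondCountableTopology E]
    [MeasurableSpace E] [BorelSpace E]
    (π : Measure E) (hπreg : π.Regular)
    (hπinv : π.IsMulRightInvariant)
    (v : Measure E) [IsProbabilityMeasure v]
    (r : ℝ)
    (h : E → ℝ≥0∞) (hmeas : Measurable h) :
    (IsRInvMeasure r v (π.withDensity h) ↔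
      ¬ (h =ᵐ[π] 0) ∧
        ∀ᵐ x ∂π, h x =
          ENNReal.ofReal r * ∫⁻ y, h (x * y) ∂(Measure.map (fun z => z⁻¹) v)) ∧
    mconv (π.withDensity h) v =
      π.withDensity (fun x => ∫⁻ y, h (x * y) ∂(Measure.map (fun z => z⁻¹) v)) := by
  have hdual : (fun x => ∫⁻ y, h (x * y) ∂(Measure.map (fun z => z⁻¹) v)) =
      fun x => ∫⁻ z, h (x * z⁻¹) ∂v :=
    funext fun x => lintegral_map (by fun_prop) measurable_inv
  have hconv : mconv (π.withDensity h) v =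
      π.withDensity (fun x => ∫⁻ y, h (x * y) ∂(Measure.map (fun z => z⁻¹) v)) := by
    rw [hdual]
    exact mconv_withDensity_eq_withDensity hmeas
  refine ⟨?_, hconv⟩
  rw [IsRInvMeasure, hconv, withDensity_eq_smul_withDensity_iff hmeas (by fun_prop), Ne,
    withDensity_eq_zero_iff hmeas.aemeasurable]

theorem withDensity_rInvariant_iff
    {E : Type*} [TopologicalSpace E] [Group E] [IsTopologicalGroup E]
    [LocallyCompactSpace E] [SecondCountableTopology E]
    [MeasurableSpace E] [BorelSpace E]
    (π : Measure E) (hπ0 : π ≠ 0) (hπreg : π.Regular)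
    (hπinv : π.IsMulRightInvariant)
    (v : Measure E) [IsProbabilityMeasure v]
    (r : ℝ) (hr : 0 < r)
    (h : E → ℝ≥0∞) (hmeas : Measurable h) :
    (IsRInvMeasure r v (π.withDensity h) ↔
      ¬ (h =ᵐ[π] 0) ∧
        ∀ᵐ x ∂π, h x =
          ENNReal.ofReal r * ∫⁻ y, h (x * y) ∂(Measure.map (fun z => z⁻¹) v)) ∧
    mconv (π.withDensity h) v =
      π.withDensity (fun x => ∫⁻ y, h (x * y) ∂(Measure.map (fun z => z⁻¹) v)) :=
  withDensity_rInvariant_iff_general π hπreg hπinv v r h hmeas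

end
end
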